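/- (Theorem 2, third bound.) In the estimated-eigensystem smoothing spline setting, ‖f̌ − f̃‖² ≤ 4ζ₄ Σ_{k=1}^K ‖Φ̌_k − Φ_k‖² + 12‖č‖² Σ_{k=1}^K [δ̌_k² Σ_{i=1}^n (Ǔ_{ik} − U_{ik})²] + 12 n κ² ‖č‖² Σ_{k=1}^K (δ̌_k − δ_k)² + (12 ζ₃' + 2 ζ₂') ‖Σ̌ − Σ̃‖_F². -/

import Mathlib

/-!
Since `Tᵀc = 0` and `T = Q₁R` with `R` invertible, `c = Q₂z`; projecting the system onto the two
blocks of `(Q₁ Q₂)` gives `(Q₂ᵀΣQ₂ + nλ)z = Q₂ᵀy` and `Rd + Q₁ᵀΣQ₂z = Q₁ᵀy`. Subtracting the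
`z`-equations for `Σ̃` and `Σ̌` gives `(Q₂ᵀΣ̃Q₂ + nλ)(z̃ − ž) = Q₂ᵀ(Σ̌ − Σ̃)Q₂ž`, and expanding in
eigenvectors bounds `‖č − c̃‖² = ‖ž − z̃‖²` by `B̃B̌‖Q₂ᵀy‖²‖Σ̌ − Σ̃‖_F²`. The `d`-equations write
`R(ď − d̃)` as `Q₁ᵀΣ̃Q₂(z̃ − ž) − Q₁ᵀ(Σ̌ − Σ̃)Q₂ž`, and `1 ≤ B̃‖Q₂ᵀΣ̃Q₂‖_F²` absorbs the second term
into `B̃‖Σ̃‖_F²`; moreover `‖v‖² ≤ λ_max(A)‖Rv‖²` because `A` inverts `TᵀT` on the range of `T`.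
Finally `f̌ − f̃` splits into its component on the `φ_ν`, the part `Σ (ǎ_k − ã_k)Φ_k`, and
`Σ ǎ_k(Φ̌_k − Φ_k)`; orthonormality and Cauchy–Schwarz bound each.
-/

open Matrix BigOperators

noncomputable def frobSq {m n : ℕ} (M : Matrix (Fin m) (Fin n) ℝ) : ℝ :=
  ∑ i, ∑ j, (M i j) ^ 2

noncomputable def vnormSq {m : ℕ} (v : Fin m → ℝ) : ℝ := ∑ i, (v i) ^ 2

section SquaredNorms

variable {m n k : ℕ}

lemma vnormSq_nonneg (v : Fin m → ℝ) : 0 ≤ vnormSq v :=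
  Finset.sum_nonneg fun _ _ => sq_nonneg _

lemma frobSq_nonneg (M : Matrix (Fin m) (Fin n) ℝ) : 0 ≤ frobSq M :=
  Finset.sum_nonneg fun _ _ => Finset.sum_nonneg fun _ _ => sq_nonneg _

lemma vnormSq_eq_dotProduct (v : Fin m → ℝ) : vnormSq v = v ⬝ᵥ v := by
  simp [vnormSq, dotProduct, sq]

lemma vnormSq_eq_norm_sq (v : Fin m → ℝ) : vnormSq v = ‖WithLp.toLp 2 v‖ ^ 2 := by
  simp [vnormSq, EuclideanSpace.norm_sq_eq]

lemma vnormSq_sub_comm (u v : Fin m → ℝ) : vnormSq (u - v) = vnormSq (v - u) := by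
  simp only [vnormSq, Pi.sub_apply, sub_sq_comm]

lemma vnormSq_sub_le (u v : Fin m → ℝ) : vnormSq (u - v) ≤ 2 * vnormSq u + 2 * vnormSq v := by
  simp only [vnormSq, Pi.sub_apply, Finset.mul_sum, ← Finset.sum_add_distrib]
  exact Finset.sum_le_sum fun i _ => by nlinarith [sq_nonneg (u i + v i)]

lemma vnormSq_smul (a : ℝ) (v : Fin m → ℝ) : vnormSq (a • v) = a ^ 2 * vnormSq v := by
  simp [vnormSq, Finset.mul_sum, mul_pow]

lemma frobSq_transpose (M : Matrix (Fin m) (Fin n) ℝ) : frobSq Mᵀ = frobSq M := by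
  rw [frobSq, frobSq, Finset.sum_comm]; rfl

lemma frobSq_eq_trace (M : Matrix (Fin m) (Fin n) ℝ) : frobSq M = (M * Mᵀ).trace := by
  simp [frobSq, trace, mul_apply, sq]

lemma frobSq_of_transpose_mul_self_eq_one {M : Matrix (Fin m) (Fin n) ℝ} (hM : Mᵀ * M = 1) :
    frobSq M = n := by
  rw [← frobSq_transpose, frobSq_eq_trace, transpose_transpose, hM, trace_one, Fintype.card_fin]

lemma vnormSq_mulVec_le (M : Matrix (Fin m) (Fin n) ℝ) (x : Fin n → ℝ) :
    vnormSq (M *ᵥ x) ≤ frobSq M * vnormSq x := by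
  rw [vnormSq, frobSq, Finset.sum_mul]
  exact Finset.sum_le_sum fun i _ => by
    simpa [mulVec, dotProduct, vnormSq] using Finset.sum_mul_sq_le_sq_mul_sq _ (M i) x

lemma vnormSq_mulVec_of_transpose_mul_self_eq_one {M : Matrix (Fin m) (Fin n) ℝ}
    (hM : Mᵀ * M = 1) (x : Fin n → ℝ) : vnormSq (M *ᵥ x) = vnormSq x := by
  rw [vnormSq_eq_dotProduct, vnormSq_eq_dotProduct, dotProduct_mulVec, ← mulVec_transpose,
    dotProduct_comm, mulVec_mulVec, hM, one_mulVec]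

section Complement

variable {a b : ℕ} {Q₁ : Matrix (Fin n) (Fin a) ℝ} {Q₂ : Matrix (Fin n) (Fin b) ℝ}

lemma frobSq_mul_add_frobSq_mul (hQ : Q₁ * Q₁ᵀ + Q₂ * Q₂ᵀ = 1) (M : Matrix (Fin k) (Fin n) ℝ) :
    frobSq (M * Q₁) + frobSq (M * Q₂) = frobSq M := by
  rw [frobSq_eq_trace, frobSq_eq_trace, frobSq_eq_trace, ← trace_add]
  congr 1
  calc M * Q₁ * (M * Q₁)ᵀ + M * Q₂ * (M * Q₂)ᵀ = M * (Q₁ * Q₁ᵀ + Q₂ * Q₂ᵀ) * Mᵀ := by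
        simp only [transpose_mul, Matrix.mul_add, Matrix.add_mul, Matrix.mul_assoc]
    _ = M * Mᵀ := by rw [hQ, Matrix.mul_one]

lemma frobSq_transpose_mul_add_frobSq_transpose_mul (hQ : Q₁ * Q₁ᵀ + Q₂ * Q₂ᵀ = 1)
    (M : Matrix (Fin n) (Fin k) ℝ) : frobSq (Q₁ᵀ * M) + frobSq (Q₂ᵀ * M) = frobSq M := by
  rw [← frobSq_transpose (Q₁ᵀ * M), ← frobSq_transpose (Q₂ᵀ * M), ← frobSq_transpose M]
  simpa only [transpose_mul, transpose_transpose] using frobSq_mul_add_frobSq_mul hQ Mᵀ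

lemma frobSq_transpose_mul_mul_le {c d : ℕ} {P₁ : Matrix (Fin n) (Fin c) ℝ}
    {P₂ : Matrix (Fin n) (Fin d) ℝ} (hP : P₁ * P₁ᵀ + P₂ * P₂ᵀ = 1) (hQ : Q₁ * Q₁ᵀ + Q₂ * Q₂ᵀ = 1)
    (M : Matrix (Fin n) (Fin n) ℝ) : frobSq (P₁ᵀ * M * Q₁) ≤ frobSq M :=
  calc frobSq (P₁ᵀ * M * Q₁) ≤ frobSq (M * Q₁) := by
        rw [Matrix.mul_assoc]
        linarith [frobSq_transpose_mul_add_frobSq_transpose_mul hP (M * Q₁),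
          frobSq_nonneg (P₂ᵀ * (M * Q₁))]
    _ ≤ frobSq M := by linarith [frobSq_mul_add_frobSq_mul hQ M, frobSq_nonneg (M * Q₂)]

end Complement

end SquaredNorms

section Spectral

variable {m : ℕ} {M : Matrix (Fin m) (Fin m) ℝ}

/-- For `M = Q₂ᵀΣ̃Q₂` this is the constant `B̃` of the paper. -/
noncomputable def Matrix.IsHermitian.sumInvSqEigenvalues (hM : M.IsHermitian) : ℝ :=
  ∑ k, (hM.eigenvalues k ^ 2)⁻¹

lemma Matrix.IsHermitian.sumInvSqEigenvalues_nonneg (hM : M.IsHermitian) :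
    0 ≤ hM.sumInvSqEigenvalues :=
  Finset.sum_nonneg fun _ _ => by positivity

lemma Matrix.IsHermitian.inv_eigenvalues_sq_le_sumInvSqEigenvalues (hM : M.IsHermitian)
    (i : Fin m) :
    (hM.eigenvalues i ^ 2)⁻¹ ≤ hM.sumInvSqEigenvalues :=
  Finset.single_le_sum (f := fun k => (hM.eigenvalues k ^ 2)⁻¹) (fun _ _ => by positivity)
    (Finset.mem_univ i)

lemma OrthonormalBasis.vnormSq_eq_sum_inner_sq
    (b : OrthonormalBasis (Fin m) ℝ (EuclideanSpace ℝ (Fin m))) (x : Fin m → ℝ) :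
    vnormSq x = ∑ i, inner ℝ (b i) (WithLp.toLp 2 x) ^ 2 := by
  rw [vnormSq_eq_norm_sq, ← b.repr.norm_map, EuclideanSpace.norm_sq_eq]
  simp [b.repr_apply_apply]

lemma Matrix.IsHermitian.inner_eigenvectorBasis_mulVec (hM : M.IsHermitian) (i : Fin m)
    (x : Fin m → ℝ) :
    inner ℝ (hM.eigenvectorBasis i) (WithLp.toLp 2 (M *ᵥ x))
      = hM.eigenvalues i * inner ℝ (hM.eigenvectorBasis i) (WithLp.toLp 2 x) := by
  have hMt : Mᵀ = M := by rw [← conjTranspose_eq_transpose_of_trivial]; exact hM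
  simp only [EuclideanSpace.inner_eq_star_dotProduct, star_trivial]
  rw [dotProduct_comm, dotProduct_mulVec, ← mulVec_transpose, hMt, hM.mulVec_eigenvectorBasis,
    smul_dotProduct, smul_eq_mul, dotProduct_comm]

lemma Matrix.PosDef.vnormSq_le_mul_vnormSq_add_smul_one_mulVec (hM : M.PosDef) {c : ℝ}
    (hc : 0 ≤ c) (x : Fin m → ℝ) :
    vnormSq x ≤ hM.1.sumInvSqEigenvalues * vnormSq ((M + c • 1) *ᵥ x) := by
  have hMc : (M + c • 1) *ᵥ x = M *ᵥ x + c • x := by rw [add_mulVec, smul_mulVec, one_mulVec]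
  rw [hM.1.eigenvectorBasis.vnormSq_eq_sum_inner_sq, hM.1.eigenvectorBasis.vnormSq_eq_sum_inner_sq,
    Finset.mul_sum]
  refine Finset.sum_le_sum fun i _ => ?_
  rw [hMc, WithLp.toLp_add, WithLp.toLp_smul, inner_add_right, inner_smul_right,
    hM.1.inner_eigenvectorBasis_mulVec]
  set t := inner ℝ (hM.1.eigenvectorBasis i) (WithLp.toLp 2 x)
  have hμ : 0 < hM.1.eigenvalues i := hM.eigenvalues_pos i
  have hle := hM.1.inv_eigenvalues_sq_le_sumInvSqEigenvalues i
  calc t ^ 2 = (hM.1.eigenvalues i ^ 2)⁻¹ * (hM.1.eigenvalues i * t) ^ 2 := by field_simp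
    _ ≤ hM.1.sumInvSqEigenvalues * (hM.1.eigenvalues i * t + c * t) ^ 2 := by
      have hsq : (hM.1.eigenvalues i * t) ^ 2 ≤ (hM.1.eigenvalues i * t + c * t) ^ 2 := by
        nlinarith [mul_nonneg (mul_nonneg hc hμ.le) (sq_nonneg t), mul_nonneg hc hc,
          mul_nonneg (mul_nonneg hc hc) (sq_nonneg t)]
      gcongr
      exact hM.1.sumInvSqEigenvalues_nonneg

lemma Matrix.IsHermitian.dotProduct_mulVec_le_iSup_eigenvalues_mul (hM : M.IsHermitian)
    (x : Fin m → ℝ) : x ⬝ᵥ (M *ᵥ x) ≤ (⨆ i, hM.eigenvalues i) * vnormSq x := by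
  have hx : x ⬝ᵥ (M *ᵥ x)
      = ∑ i, hM.eigenvalues i * inner ℝ (hM.eigenvectorBasis i) (WithLp.toLp 2 x) ^ 2 := by
    rw [show x ⬝ᵥ (M *ᵥ x) = inner ℝ (WithLp.toLp 2 x) (WithLp.toLp 2 (M *ᵥ x)) by
      simp [EuclideanSpace.inner_toLp_toLp, dotProduct_comm],
      ← hM.eigenvectorBasis.sum_inner_mul_inner]
    refine Finset.sum_congr rfl fun i _ => ?_
    rw [hM.inner_eigenvectorBasis_mulVec, real_inner_comm]
    ring
  rw [hx, hM.eigenvectorBasis.vnormSq_eq_sum_inner_sq, Finset.mul_sum]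
  exact Finset.sum_le_sum fun i _ =>
    mul_le_mul_of_nonneg_right (le_ciSup (Set.finite_range _).bddAbove i) (sq_nonneg _)

lemma Matrix.IsHermitian.eigenvalues_sq_le_frobSq (hM : M.IsHermitian) (i : Fin m) :
    hM.eigenvalues i ^ 2 ≤ frobSq M := by
  have h := vnormSq_mulVec_le M (hM.eigenvectorBasis i)
  have hunit : vnormSq (hM.eigenvectorBasis i) = 1 := by
    rw [vnormSq_eq_norm_sq, WithLp.toLp_ofLp, hM.eigenvectorBasis.orthonormal.1 i, one_pow]
  rwa [hM.mulVec_eigenvectorBasis, vnormSq_smul, hunit, mul_one, mul_one] at h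

lemma Matrix.PosDef.one_le_sumInvSqEigenvalues_mul_frobSq [NeZero m] (hM : M.PosDef) :
    1 ≤ hM.1.sumInvSqEigenvalues * frobSq M := by
  have hμ : 0 < hM.1.eigenvalues 0 := hM.eigenvalues_pos 0
  calc (1 : ℝ) = (hM.1.eigenvalues 0 ^ 2)⁻¹ * hM.1.eigenvalues 0 ^ 2 := by field_simp
    _ ≤ hM.1.sumInvSqEigenvalues * frobSq M := by
      gcongr
      · exact hM.1.sumInvSqEigenvalues_nonneg
      · exact hM.1.inv_eigenvalues_sq_le_sumInvSqEigenvalues 0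
      · exact hM.1.eigenvalues_sq_le_frobSq 0

end Spectral

lemma Matrix.PosDef.vnormSq_sub_le_of_add_smul_one_mulVec_eq {q : ℕ}
    {Mt Mc : Matrix (Fin q) (Fin q) ℝ} (ht : Mt.PosDef) (hc : Mc.PosDef) {ρ : ℝ} (hρ : 0 ≤ ρ)
    {zt zc w : Fin q → ℝ} (hzt : (Mt + ρ • 1) *ᵥ zt = w) (hzc : (Mc + ρ • 1) *ᵥ zc = w) :
    vnormSq (zt - zc) ≤
      ht.1.sumInvSqEigenvalues * hc.1.sumInvSqEigenvalues * frobSq (Mc - Mt) * vnormSq w := by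
  have hdiff : (Mt + ρ • 1) *ᵥ (zt - zc) = (Mc - Mt) *ᵥ zc := by
    rw [mulVec_sub, hzt, ← hzc, add_mulVec, add_mulVec, sub_mulVec]
    abel
  have hzc_le := hc.vnormSq_le_mul_vnormSq_add_smul_one_mulVec hρ zc
  rw [hzc] at hzc_le
  have hBt := ht.1.sumInvSqEigenvalues_nonneg
  calc vnormSq (zt - zc) ≤ ht.1.sumInvSqEigenvalues * vnormSq ((Mc - Mt) *ᵥ zc) :=
        hdiff ▸ ht.vnormSq_le_mul_vnormSq_add_smul_one_mulVec hρ _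
    _ ≤ ht.1.sumInvSqEigenvalues * (frobSq (Mc - Mt) * (hc.1.sumInvSqEigenvalues * vnormSq w)) := by
        gcongr
        exact (vnormSq_mulVec_le _ _).trans (by gcongr; exact frobSq_nonneg _)
    _ = _ := by ring

lemma posSemidef_mul_inv_mul_inv_mul_transpose {n p : ℕ} (T : Matrix (Fin n) (Fin p) ℝ) :
    (T * ((Tᵀ * T)⁻¹ * (Tᵀ * T)⁻¹) * Tᵀ).PosSemidef := by
  have hG : ((Tᵀ * T)⁻¹)ᵀ = (Tᵀ * T)⁻¹ := by
    rw [transpose_nonsing_inv, transpose_mul, transpose_transpose]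
  have h : T * ((Tᵀ * T)⁻¹ * (Tᵀ * T)⁻¹) * Tᵀ = (T * (Tᵀ * T)⁻¹) * (T * (Tᵀ * T)⁻¹)ᴴ := by
    rw [conjTranspose_eq_transpose_of_trivial, transpose_mul, hG]
    simp only [Matrix.mul_assoc]
  rw [h]
  exact posSemidef_self_mul_conjTranspose _

section SmoothingSystem

variable {n p q : ℕ} {T Q₁ : Matrix (Fin n) (Fin p) ℝ} {Q₂ : Matrix (Fin n) (Fin q) ℝ}
  {R : Matrix (Fin p) (Fin p) ℝ}

lemma exists_mulVec_eq_of_transpose_mulVec_eq_zero (hR : IsUnit R) (hT : T = Q₁ * R)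
    (hQ : Q₁ * Q₁ᵀ + Q₂ * Q₂ᵀ = 1) {c : Fin n → ℝ} (hc : Tᵀ *ᵥ c = 0) : ∃ z, Q₂ *ᵥ z = c := by
  have hQ₁c : Q₁ᵀ *ᵥ c = 0 := mulVec_injective_iff_isUnit.2 ((isUnit_transpose R).2 hR) <| by
    rw [mulVec_mulVec, ← transpose_mul, ← hT, hc, mulVec_zero]
  refine ⟨Q₂ᵀ *ᵥ c, ?_⟩
  simpa [add_mulVec, ← mulVec_mulVec, hQ₁c] using congrArg (· *ᵥ c) hQ

lemma transpose_mulVec_smoothingSystem_fst (hQ₁ : Q₁ᵀ * Q₁ = 1) (hQ₁₂ : Q₁ᵀ * Q₂ = 0)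
    (hT : T = Q₁ * R) (S : Matrix (Fin n) (Fin n) ℝ) (ρ : ℝ) (d : Fin p → ℝ) (z : Fin q → ℝ) :
    Q₁ᵀ *ᵥ (T *ᵥ d + (S + ρ • 1) *ᵥ (Q₂ *ᵥ z)) = R *ᵥ d + (Q₁ᵀ * S * Q₂) *ᵥ z := by
  simp [mulVec_add, mulVec_mulVec, hT, ← Matrix.mul_assoc, Matrix.mul_add, Matrix.add_mul, hQ₁,
    hQ₁₂]

lemma transpose_mulVec_smoothingSystem_snd (hQ₂ : Q₂ᵀ * Q₂ = 1) (hQ₁₂ : Q₁ᵀ * Q₂ = 0)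
    (hT : T = Q₁ * R) (S : Matrix (Fin n) (Fin n) ℝ) (ρ : ℝ) (d : Fin p → ℝ) (z : Fin q → ℝ) :
    Q₂ᵀ *ᵥ (T *ᵥ d + (S + ρ • 1) *ᵥ (Q₂ *ᵥ z)) = (Q₂ᵀ * S * Q₂ + ρ • 1) *ᵥ z := by
  have hQ₂₁ : Q₂ᵀ * Q₁ = 0 := by
    rw [← transpose_transpose Q₁, ← transpose_mul, hQ₁₂, transpose_zero]
  simp [mulVec_add, add_mulVec, mulVec_mulVec, hT, ← Matrix.mul_assoc, Matrix.add_mul, hQ₂, hQ₂₁]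

lemma vnormSq_sub_le_of_smoothingSystem_snd (hQ : Q₁ * Q₁ᵀ + Q₂ * Q₂ᵀ = 1)
    {St Sc : Matrix (Fin n) (Fin n) ℝ} (ht : (Q₂ᵀ * St * Q₂).PosDef) (hc : (Q₂ᵀ * Sc * Q₂).PosDef)
    {ρ : ℝ} (hρ : 0 ≤ ρ) {zt zc w : Fin q → ℝ} (hzt : (Q₂ᵀ * St * Q₂ + ρ • 1) *ᵥ zt = w)
    (hzc : (Q₂ᵀ * Sc * Q₂ + ρ • 1) *ᵥ zc = w) {W : ℝ} (hw : vnormSq w ≤ W) :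
    vnormSq (zt - zc) ≤
      W * ht.1.sumInvSqEigenvalues * hc.1.sumInvSqEigenvalues * frobSq (Sc - St) := by
  have hQ' : Q₂ * Q₂ᵀ + Q₁ * Q₁ᵀ = 1 := by rwa [add_comm]
  have hcompress : frobSq (Q₂ᵀ * Sc * Q₂ - Q₂ᵀ * St * Q₂) ≤ frobSq (Sc - St) := by
    rw [← Matrix.sub_mul, ← Matrix.mul_sub]
    exact frobSq_transpose_mul_mul_le hQ' hQ' _
  have hBt := ht.1.sumInvSqEigenvalues_nonneg
  have hBc := hc.1.sumInvSqEigenvalues_nonneg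
  calc vnormSq (zt - zc) ≤ ht.1.sumInvSqEigenvalues * hc.1.sumInvSqEigenvalues *
        frobSq (Q₂ᵀ * Sc * Q₂ - Q₂ᵀ * St * Q₂) * vnormSq w :=
        ht.vnormSq_sub_le_of_add_smul_one_mulVec_eq hc hρ hzt hzc
    _ ≤ ht.1.sumInvSqEigenvalues * hc.1.sumInvSqEigenvalues * frobSq (Sc - St) * W :=
        mul_le_mul (mul_le_mul_of_nonneg_left hcompress (mul_nonneg hBt hBc)) hw
          (vnormSq_nonneg w) (mul_nonneg (mul_nonneg hBt hBc) (frobSq_nonneg _))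
    _ = _ := by ring

lemma vnormSq_le_iSup_eigenvalues_mul_vnormSq_mulVec (hQ₁ : Q₁ᵀ * Q₁ = 1) (hR : IsUnit R)
    (hT : T = Q₁ * R) (hA : (T * ((Tᵀ * T)⁻¹ * (Tᵀ * T)⁻¹) * Tᵀ).IsHermitian) (v : Fin p → ℝ) :
    vnormSq v ≤ (⨆ i, hA.eigenvalues i) * vnormSq (R *ᵥ v) := by
  have hG : IsUnit (Tᵀ * T).det := by
    rw [hT, transpose_mul, Matrix.mul_assoc, ← Matrix.mul_assoc Q₁ᵀ, hQ₁, Matrix.one_mul,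
      det_mul, det_transpose]
    exact ((isUnit_iff_isUnit_det R).1 hR).mul ((isUnit_iff_isUnit_det R).1 hR)
  have hTAT : Tᵀ * (T * ((Tᵀ * T)⁻¹ * (Tᵀ * T)⁻¹) * Tᵀ) * T = 1 :=
    calc Tᵀ * (T * ((Tᵀ * T)⁻¹ * (Tᵀ * T)⁻¹) * Tᵀ) * T
        = (Tᵀ * T * (Tᵀ * T)⁻¹) * ((Tᵀ * T)⁻¹ * (Tᵀ * T)) := by simp only [Matrix.mul_assoc]
      _ = 1 := by rw [mul_nonsing_inv _ hG, nonsing_inv_mul _ hG, Matrix.one_mul]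
  have hquad : (T *ᵥ v) ⬝ᵥ ((T * ((Tᵀ * T)⁻¹ * (Tᵀ * T)⁻¹) * Tᵀ) *ᵥ (T *ᵥ v)) = vnormSq v := by
    rw [dotProduct_comm, dotProduct_mulVec, ← mulVec_transpose, dotProduct_comm, mulVec_mulVec,
      mulVec_mulVec, hTAT, one_mulVec, vnormSq_eq_dotProduct]
  calc vnormSq v = (T *ᵥ v) ⬝ᵥ ((T * ((Tᵀ * T)⁻¹ * (Tᵀ * T)⁻¹) * Tᵀ) *ᵥ (T *ᵥ v)) := hquad.symm
    _ ≤ (⨆ i, hA.eigenvalues i) * vnormSq (T *ᵥ v) := hA.dotProduct_mulVec_le_iSup_eigenvalues_mul _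
    _ = (⨆ i, hA.eigenvalues i) * vnormSq (R *ᵥ v) := by
        congr 1
        rw [hT, ← mulVec_mulVec, vnormSq_mulVec_of_transpose_mul_self_eq_one hQ₁]

lemma sumInvSqEigenvalues_mul_frobSq_add_one_le [NeZero q] (hQ : Q₁ * Q₁ᵀ + Q₂ * Q₂ᵀ = 1)
    {S : Matrix (Fin n) (Fin n) ℝ} (hS : (Q₂ᵀ * S * Q₂).PosDef) :
    hS.1.sumInvSqEigenvalues * frobSq (Q₁ᵀ * S * Q₂) + 1 ≤ hS.1.sumInvSqEigenvalues * frobSq S := by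
  have hQ' : Q₂ * Q₂ᵀ + Q₁ * Q₁ᵀ = 1 := by rwa [add_comm]
  have hsplit : frobSq (Q₁ᵀ * S * Q₂) + frobSq (Q₂ᵀ * S * Q₂) ≤ frobSq S := by
    simp only [Matrix.mul_assoc]
    linarith [frobSq_transpose_mul_add_frobSq_transpose_mul hQ (S * Q₂),
      frobSq_mul_add_frobSq_mul hQ' S, frobSq_nonneg (S * Q₁)]
  nlinarith [hS.one_le_sumInvSqEigenvalues_mul_frobSq, hS.1.sumInvSqEigenvalues_nonneg]

lemma vnormSq_sub_le_of_smoothingSystem_fst [NeZero q] (hQ₁ : Q₁ᵀ * Q₁ = 1) (hR : IsUnit R)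
    (hT : T = Q₁ * R) (hQ : Q₁ * Q₁ᵀ + Q₂ * Q₂ᵀ = 1)
    (hA : (T * ((Tᵀ * T)⁻¹ * (Tᵀ * T)⁻¹) * Tᵀ).IsHermitian)
    {St Sc : Matrix (Fin n) (Fin n) ℝ} (ht : (Q₂ᵀ * St * Q₂).PosDef) (hc : (Q₂ᵀ * Sc * Q₂).PosDef)
    {ρ : ℝ} (hρ : 0 ≤ ρ) {zt zc w : Fin q → ℝ} (hzt : (Q₂ᵀ * St * Q₂ + ρ • 1) *ᵥ zt = w)
    (hzc : (Q₂ᵀ * Sc * Q₂ + ρ • 1) *ᵥ zc = w) {W : ℝ} (hw : vnormSq w ≤ W) {dt dc : Fin p → ℝ}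
    (hd : R *ᵥ dc + (Q₁ᵀ * Sc * Q₂) *ᵥ zc = R *ᵥ dt + (Q₁ᵀ * St * Q₂) *ᵥ zt) :
    vnormSq (dc - dt) ≤ 2 * (⨆ i, hA.eigenvalues i) *
      (W * ht.1.sumInvSqEigenvalues * hc.1.sumInvSqEigenvalues * frobSq St) * frobSq (Sc - St) := by
  set Bt := ht.1.sumInvSqEigenvalues
  set Bc := hc.1.sumInvSqEigenvalues
  have hRd : R *ᵥ (dc - dt) = (Q₁ᵀ * St * Q₂) *ᵥ (zt - zc) - (Q₁ᵀ * (Sc - St) * Q₂) *ᵥ zc := by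
    rw [mulVec_sub, mulVec_sub, Matrix.mul_sub, Matrix.sub_mul, sub_mulVec]
    linear_combination hd
  have hQ' : Q₂ * Q₂ᵀ + Q₁ * Q₁ᵀ = 1 := by rwa [add_comm]
  have hzc_le : vnormSq zc ≤ Bc * W :=
    (hzc ▸ hc.vnormSq_le_mul_vnormSq_add_smul_one_mulVec hρ zc).trans
      (mul_le_mul_of_nonneg_left hw hc.1.sumInvSqEigenvalues_nonneg)
  have hz := vnormSq_sub_le_of_smoothingSystem_snd hQ ht hc hρ hzt hzc hw
  have hoff := frobSq_transpose_mul_mul_le hQ hQ' (Sc - St)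
  have hA0 : 0 ≤ ⨆ i, hA.eigenvalues i :=
    Real.iSup_nonneg (posSemidef_mul_inv_mul_inv_mul_transpose T).eigenvalues_nonneg
  have hW : 0 ≤ W := (vnormSq_nonneg w).trans hw
  have hBc := hc.1.sumInvSqEigenvalues_nonneg
  have hD := frobSq_nonneg (Sc - St)
  have hRd_le : vnormSq (R *ᵥ (dc - dt)) ≤
      2 * (frobSq (Q₁ᵀ * St * Q₂) * (W * Bt * Bc * frobSq (Sc - St))) +
        2 * (frobSq (Sc - St) * (Bc * W)) := by
    rw [hRd]
    refine (vnormSq_sub_le _ _).trans (add_le_add ?_ ?_) <;>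
      refine mul_le_mul_of_nonneg_left ((vnormSq_mulVec_le _ _).trans ?_) zero_le_two
    · exact mul_le_mul_of_nonneg_left hz (frobSq_nonneg _)
    · exact mul_le_mul hoff hzc_le (vnormSq_nonneg _) hD
  calc vnormSq (dc - dt) ≤ (⨆ i, hA.eigenvalues i) * vnormSq (R *ᵥ (dc - dt)) :=
        vnormSq_le_iSup_eigenvalues_mul_vnormSq_mulVec hQ₁ hR hT hA _
    _ ≤ (⨆ i, hA.eigenvalues i) * (2 * (frobSq (Q₁ᵀ * St * Q₂) * (W * Bt * Bc * frobSq (Sc - St))) +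
        2 * (frobSq (Sc - St) * (Bc * W))) := mul_le_mul_of_nonneg_left hRd_le hA0
    _ = 2 * (⨆ i, hA.eigenvalues i) * (W * Bc * frobSq (Sc - St)) *
        (Bt * frobSq (Q₁ᵀ * St * Q₂) + 1) := by ring
    _ ≤ 2 * (⨆ i, hA.eigenvalues i) * (W * Bc * frobSq (Sc - St)) * (Bt * frobSq St) :=
        mul_le_mul_of_nonneg_left (sumInvSqEigenvalues_mul_frobSq_add_one_le hQ ht) (by positivity)
    _ = _ := by ring

end SmoothingSystem

section Coefficients

variable {n : ℕ} {ι : Type*}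

lemma sq_sum_mul_le_of_abs_le (c u : Fin n → ℝ) {C : ℝ} (hu : ∀ i, |u i| ≤ C) :
    (∑ i, c i * u i) ^ 2 ≤ vnormSq c * (n * C ^ 2) := by
  refine (Finset.sum_mul_sq_le_sq_mul_sq _ c u).trans
    (mul_le_mul_of_nonneg_left ?_ (vnormSq_nonneg c))
  calc ∑ i, u i ^ 2 ≤ ∑ _i : Fin n, C ^ 2 :=
        Finset.sum_le_sum fun i _ => sq_abs (u i) ▸ pow_le_pow_left₀ (abs_nonneg _) (hu i) 2
    _ = n * C ^ 2 := by simp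

lemma sum_sq_coeff_le (s : Finset ι) (c : Fin n → ℝ) (δ : ι → ℝ) (U : Fin n → ι → ℝ) {C : ℝ}
    (hU : ∀ i, ∀ k ∈ s, |U i k| ≤ C) :
    ∑ k ∈ s, (δ k * ∑ i, c i * U i k) ^ 2 ≤ vnormSq c * n * C ^ 2 * ∑ k ∈ s, δ k ^ 2 := by
  rw [Finset.mul_sum]
  refine Finset.sum_le_sum fun k hk => ?_
  rw [mul_pow, mul_comm, mul_assoc (vnormSq c)]
  exact mul_le_mul_of_nonneg_right (sq_sum_mul_le_of_abs_le c _ fun i => hU i k hk) (sq_nonneg _)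

lemma sum_sq_coeff_sub_le (s : Finset ι) (cc ct : Fin n → ℝ) (δc δ : ι → ℝ) (Uc U : Fin n → ι → ℝ)
    {C : ℝ} (hU : ∀ i, ∀ k ∈ s, |U i k| ≤ C) {E : ℝ} (hE : vnormSq (cc - ct) ≤ E) :
    ∑ k ∈ s, (δc k * ∑ i, cc i * Uc i k - δ k * ∑ i, ct i * U i k) ^ 2 ≤
      3 * vnormSq cc * ∑ k ∈ s, δc k ^ 2 * ∑ i, (Uc i k - U i k) ^ 2 +
        3 * n * C ^ 2 * vnormSq cc * ∑ k ∈ s, (δc k - δ k) ^ 2 +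
        3 * (n * C ^ 2 * ∑ k ∈ s, δ k ^ 2) * E := by
  have hC : 0 ≤ (n : ℝ) * C ^ 2 := by positivity
  calc ∑ k ∈ s, (δc k * ∑ i, cc i * Uc i k - δ k * ∑ i, ct i * U i k) ^ 2
      ≤ ∑ k ∈ s, (3 * vnormSq cc * (δc k ^ 2 * ∑ i, (Uc i k - U i k) ^ 2) +
          3 * n * C ^ 2 * vnormSq cc * (δc k - δ k) ^ 2 + 3 * n * C ^ 2 * E * δ k ^ 2) := by
        refine Finset.sum_le_sum fun k hk => ?_
        set x := δc k * ∑ i, cc i * (Uc i k - U i k)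
        set y := (δc k - δ k) * ∑ i, cc i * U i k
        set z := δ k * ∑ i, (cc - ct) i * U i k
        have hsplit : δc k * ∑ i, cc i * Uc i k - δ k * ∑ i, ct i * U i k = x + y + z := by
          simp only [x, y, z, Pi.sub_apply, mul_sub, sub_mul, Finset.sum_sub_distrib]
          ring
        have hx : x ^ 2 ≤ vnormSq cc * (δc k ^ 2 * ∑ i, (Uc i k - U i k) ^ 2) := by
          rw [mul_pow, mul_left_comm]
          exact mul_le_mul_of_nonneg_left (Finset.sum_mul_sq_le_sq_mul_sq _ _ _) (sq_nonneg _)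
        have hy : y ^ 2 ≤ n * C ^ 2 * vnormSq cc * (δc k - δ k) ^ 2 := by
          have := sq_sum_mul_le_of_abs_le cc (U · k) fun i => hU i k hk
          rw [mul_pow]
          nlinarith [sq_nonneg (δc k - δ k)]
        have hz : z ^ 2 ≤ n * C ^ 2 * E * δ k ^ 2 := by
          have := (sq_sum_mul_le_of_abs_le (cc - ct) (U · k) fun i => hU i k hk).trans
            (mul_le_mul_of_nonneg_right hE hC)
          rw [mul_pow]
          nlinarith [sq_nonneg (δ k)]
        rw [hsplit]
        nlinarith [sq_nonneg (x - y), sq_nonneg (x - z), sq_nonneg (y - z)]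
    _ = _ := by
        rw [Finset.sum_add_distrib, Finset.sum_add_distrib, ← Finset.mul_sum, ← Finset.mul_sum,
          ← Finset.mul_sum]
        ring

end Coefficients

lemma norm_add_add_sq_le {E : Type*} [SeminormedAddCommGroup E] (a b c : E) :
    ‖a + b + c‖ ^ 2 ≤ 2 * ‖a‖ ^ 2 + 4 * ‖b‖ ^ 2 + 4 * ‖c‖ ^ 2 := by
  have h : ‖a + b + c‖ ≤ ‖a‖ + (‖b‖ + ‖c‖) := by
    rw [add_assoc]
    exact (norm_add_le a (b + c)).trans (by gcongr; exact norm_add_le b c)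
  nlinarith [norm_nonneg (a + b + c), sq_nonneg (‖a‖ - ‖b‖ - ‖c‖), sq_nonneg (‖b‖ - ‖c‖)]

lemma norm_sum_smul_sq_le {E : Type*} [SeminormedAddCommGroup E] [NormedSpace ℝ E] {ι : Type*}
    (s : Finset ι) (a : ι → ℝ) (w : ι → E) :
    ‖∑ i ∈ s, a i • w i‖ ^ 2 ≤ (∑ i ∈ s, a i ^ 2) * ∑ i ∈ s, ‖w i‖ ^ 2 := by
  have h : ‖∑ i ∈ s, a i • w i‖ ≤ ∑ i ∈ s, |a i| * ‖w i‖ :=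
    (norm_sum_le _ _).trans_eq (Finset.sum_congr rfl fun i _ => by rw [norm_smul, Real.norm_eq_abs])
  calc ‖∑ i ∈ s, a i • w i‖ ^ 2 ≤ (∑ i ∈ s, |a i| * ‖w i‖) ^ 2 := by gcongr
    _ ≤ (∑ i ∈ s, |a i| ^ 2) * ∑ i ∈ s, ‖w i‖ ^ 2 := Finset.sum_mul_sq_le_sq_mul_sq _ _ _
    _ = (∑ i ∈ s, a i ^ 2) * ∑ i ∈ s, ‖w i‖ ^ 2 := by simp only [sq_abs]

section HilbertExpansion

variable {H : Type*} [NormedAddCommGroup H] [InnerProductSpace ℝ H] {ι : Type*}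

lemma Orthonormal.norm_sum_smul_sq {v : ι → H} (hv : Orthonormal ℝ v) (s : Finset ι) (l : ι → ℝ) :
    ‖∑ i ∈ s, l i • v i‖ ^ 2 = ∑ i ∈ s, l i ^ 2 := by
  rw [← real_inner_self_eq_norm_sq, hv.inner_sum l l s]
  simp [sq]

lemma norm_expansion_sub_sq_le {p : ℕ} {φ : Fin p → H} (hφ : Orthonormal ℝ φ) {Φ : ι → H}
    (hΦ : Orthonormal ℝ Φ) (Φc : ι → H) (s : Finset ι) (dc dt : Fin p → ℝ) (a b : ι → ℝ) :
    ‖(∑ ν, dc ν • φ ν + ∑ k ∈ s, a k • Φc k) - (∑ ν, dt ν • φ ν + ∑ k ∈ s, b k • Φ k)‖ ^ 2 ≤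
      2 * vnormSq (dc - dt) + 4 * ∑ k ∈ s, (a k - b k) ^ 2 +
        4 * ((∑ k ∈ s, a k ^ 2) * ∑ k ∈ s, ‖Φc k - Φ k‖ ^ 2) := by
  have hsplit : (∑ ν, dc ν • φ ν + ∑ k ∈ s, a k • Φc k) - (∑ ν, dt ν • φ ν + ∑ k ∈ s, b k • Φ k) =
      ∑ ν, (dc - dt) ν • φ ν + ∑ k ∈ s, (a k - b k) • Φ k + ∑ k ∈ s, a k • (Φc k - Φ k) := by
    simp only [Pi.sub_apply, sub_smul, smul_sub, Finset.sum_sub_distrib]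
    abel
  rw [hsplit]
  refine (norm_add_add_sq_le _ _ _).trans ?_
  rw [hφ.norm_sum_smul_sq, hΦ.norm_sum_smul_sq]
  gcongr
  · exact le_rfl
  · exact norm_sum_smul_sq_le s a _

end HilbertExpansion

theorem stmt18_general
    (n p : ℕ) (hpn : p < n)
    (y : Fin n → ℝ) (lam : ℝ) (hlam : 0 < lam)
    (T Q₁ : Matrix (Fin n) (Fin p) ℝ) (Q₂ : Matrix (Fin n) (Fin (n - p)) ℝ)
    (R : Matrix (Fin p) (Fin p) ℝ)
    (hQ₁ : Q₁ᵀ * Q₁ = 1) (hQ₂ : Q₂ᵀ * Q₂ = 1) (hQ₁₂ : Q₁ᵀ * Q₂ = 0)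
    (hQ : Q₁ * Q₁ᵀ + Q₂ * Q₂ᵀ = 1)
    (hR : IsUnit R) (hT : T = Q₁ * R)
    (K : ℕ) (κ κ' : ℝ)
    (δ : ℕ → ℝ)
    (δc : ℕ → ℝ)
    (U : Fin n → ℕ → ℝ) (hU : ∀ i k, |U i k| ≤ κ)
    (Uc : Fin n → ℕ → ℝ) (hUc : ∀ i, ∀ k < K, |Uc i k| ≤ κ')
    (St Sc : Matrix (Fin n) (Fin n) ℝ)
    (hpdt : (Q₂ᵀ * St * Q₂).PosDef) (hpdc : (Q₂ᵀ * Sc * Q₂).PosDef)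
    (hA : (T * ((Tᵀ * T)⁻¹ * (Tᵀ * T)⁻¹) * Tᵀ).IsHermitian)
    (ct : Fin n → ℝ) (dt : Fin p → ℝ)
    (hcdt : T *ᵥ dt + (St + ((n : ℝ) * lam) • 1) *ᵥ ct = y) (hct0 : Tᵀ *ᵥ ct = 0)
    (cc : Fin n → ℝ) (dc : Fin p → ℝ)
    (hcdc : T *ᵥ dc + (Sc + ((n : ℝ) * lam) • 1) *ᵥ cc = y) (hcc0 : Tᵀ *ᵥ cc = 0)
    {H : Type*} [NormedAddCommGroup H] [InnerProductSpace ℝ H]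
    (φ : Fin p → H) (Φ Φc : ℕ → H) (hφ : Orthonormal ℝ φ) (hΦ : Orthonormal ℝ Φ) :
    ‖((∑ ν, dc ν • φ ν) + ∑ k ∈ Finset.range K, (δc k * ∑ i, cc i * Uc i k) • Φc k) -
        ((∑ ν, dt ν • φ ν) + ∑ k ∈ Finset.range K, (δ k * ∑ i, ct i * U i k) • Φ k)‖ ^ 2 ≤
      4 * (vnormSq cc * (n : ℝ) * κ' ^ 2 * (∑ k ∈ Finset.range K, δc k ^ 2)) *
          (∑ k ∈ Finset.range K, ‖Φc k - Φ k‖ ^ 2) +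
        12 * vnormSq cc *
          (∑ k ∈ Finset.range K, δc k ^ 2 * ∑ i, (Uc i k - U i k) ^ 2) +
        12 * (n : ℝ) * κ ^ 2 * vnormSq cc * (∑ k ∈ Finset.range K, (δc k - δ k) ^ 2) +
        (12 * ((n : ℝ) * κ ^ 2 * (∑ k ∈ Finset.range K, δ k ^ 2) *
            ((frobSq Q₂) ^ 3 * vnormSq (Q₂ᵀ *ᵥ y)) *
            (∑ k, ((hpdt.1.eigenvalues k) ^ 2)⁻¹) *
            (∑ k, ((hpdc.1.eigenvalues k) ^ 2)⁻¹)) +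
          2 * (2 * (⨆ i, hA.eigenvalues i) *
            (((frobSq Q₂) ^ 3 * vnormSq (Q₂ᵀ *ᵥ y)) *
              (∑ k, ((hpdt.1.eigenvalues k) ^ 2)⁻¹) *
              (∑ k, ((hpdc.1.eigenvalues k) ^ 2)⁻¹) *
              frobSq St + vnormSq ct))) * frobSq (Sc - St) := by
  have hρ : 0 ≤ (n : ℝ) * lam := by positivity
  have : NeZero (n - p) := ⟨by omega⟩
  obtain ⟨zt, rfl⟩ := exists_mulVec_eq_of_transpose_mulVec_eq_zero hR hT hQ hct0
  obtain ⟨zc, rfl⟩ := exists_mulVec_eq_of_transpose_mulVec_eq_zero hR hT hQ hcc0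
  have hzt : (Q₂ᵀ * St * Q₂ + ((n : ℝ) * lam) • 1) *ᵥ zt = Q₂ᵀ *ᵥ y := by
    rw [← transpose_mulVec_smoothingSystem_snd hQ₂ hQ₁₂ hT, hcdt]
  have hzc : (Q₂ᵀ * Sc * Q₂ + ((n : ℝ) * lam) • 1) *ᵥ zc = Q₂ᵀ *ᵥ y := by
    rw [← transpose_mulVec_smoothingSystem_snd hQ₂ hQ₁₂ hT, hcdc]
  have hw : vnormSq (Q₂ᵀ *ᵥ y) ≤ frobSq Q₂ ^ 3 * vnormSq (Q₂ᵀ *ᵥ y) := by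
    refine le_mul_of_one_le_left (vnormSq_nonneg _) (one_le_pow₀ ?_)
    rw [frobSq_of_transpose_mul_self_eq_one hQ₂]
    exact_mod_cast NeZero.one_le
  have hc : vnormSq (Q₂ *ᵥ zc - Q₂ *ᵥ zt) ≤ frobSq Q₂ ^ 3 * vnormSq (Q₂ᵀ *ᵥ y) *
      hpdt.1.sumInvSqEigenvalues * hpdc.1.sumInvSqEigenvalues * frobSq (Sc - St) := by
    rw [← mulVec_sub, vnormSq_mulVec_of_transpose_mul_self_eq_one hQ₂, vnormSq_sub_comm]
    exact vnormSq_sub_le_of_smoothingSystem_snd hQ hpdt hpdc hρ hzt hzc hw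
  have hd := vnormSq_sub_le_of_smoothingSystem_fst hQ₁ hR hT hQ hA hpdt hpdc hρ hzt hzc hw
    (by rw [← transpose_mulVec_smoothingSystem_fst hQ₁ hQ₁₂ hT, hcdc,
      ← transpose_mulVec_smoothingSystem_fst hQ₁ hQ₁₂ hT, hcdt])
  have hA0 : 0 ≤ ⨆ i, hA.eigenvalues i :=
    Real.iSup_nonneg (posSemidef_mul_inv_mul_inv_mul_transpose T).eigenvalues_nonneg
  have hexp := norm_expansion_sub_sq_le hφ hΦ Φc (Finset.range K) dc dt
    (fun k => δc k * ∑ i, (Q₂ *ᵥ zc) i * Uc i k) (fun k => δ k * ∑ i, (Q₂ *ᵥ zt) i * U i k)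
  have hcoeff := sum_sq_coeff_sub_le (Finset.range K) _ _ δc δ Uc U (fun i k _ => hU i k) hc
  have hΦ0 : 0 ≤ ∑ k ∈ Finset.range K, ‖Φc k - Φ k‖ ^ 2 := by positivity
  have hcoeffc := mul_le_mul_of_nonneg_right
    (sum_sq_coeff_le (Finset.range K) (Q₂ *ᵥ zc) δc Uc fun i k hk =>
      hUc i k (Finset.mem_range.1 hk)) hΦ0
  unfold Matrix.IsHermitian.sumInvSqEigenvalues at hd hcoeff
  linarith [mul_nonneg (mul_nonneg hA0 (vnormSq_nonneg (Q₂ *ᵥ zt))) (frobSq_nonneg (Sc - St))]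

/-- Theorem 2, third bound: in the estimated-eigensystem smoothing spline
setting, `‖f̌ − f̃‖² ≤ 4ζ₄ Σ_k ‖Φ̌_k − Φ_k‖² + 12‖č‖² Σ_k [δ̌_k² Σ_i (Ǔ_{ik} − U_{ik})²]
  + 12 n κ² ‖č‖² Σ_k (δ̌_k − δ_k)² + (12 ζ₃' + 2 ζ₂') ‖Σ̌ − Σ̃‖_F²`. -/
theorem stmt18
    (n p : ℕ) (hp : 1 ≤ p) (hpn : p < n)
    (y : Fin n → ℝ) (lam : ℝ) (hlam : 0 < lam)
    (T Q₁ : Matrix (Fin n) (Fin p) ℝ) (Q₂ : Matrix (Fin n) (Fin (n - p)) ℝ)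
    (R : Matrix (Fin p) (Fin p) ℝ)
    (hQ₁ : Q₁ᵀ * Q₁ = 1) (hQ₂ : Q₂ᵀ * Q₂ = 1) (hQ₁₂ : Q₁ᵀ * Q₂ = 0)
    (hQ : Q₁ * Q₁ᵀ + Q₂ * Q₂ᵀ = 1)
    (hR : IsUnit R) (hRtri : R.BlockTriangular id) (hT : T = Q₁ * R)
    (K : ℕ) (hK : 1 ≤ K) (κ κ' : ℝ) (hκ : 0 < κ) (hκ' : 0 < κ')
    (δ : ℕ → ℝ) (hδ0 : ∀ k, 0 ≤ δ k) (hδmono : ∀ k, δ (k + 1) ≤ δ k) (hδsum : Summable δ)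
    (δc : ℕ → ℝ) (hδc0 : ∀ k < K, 0 ≤ δc k)
    (U : Fin n → ℕ → ℝ) (hU : ∀ i k, |U i k| ≤ κ)
    (Uc : Fin n → ℕ → ℝ) (hUc : ∀ i, ∀ k < K, |Uc i k| ≤ κ')
    (St Sc : Matrix (Fin n) (Fin n) ℝ)
    (hSt : ∀ i j, St i j = ∑ k ∈ Finset.range K, δ k * U i k * U j k)
    (hSc : ∀ i j, Sc i j = ∑ k ∈ Finset.range K, δc k * Uc i k * Uc j k)
    (hStpsd : St.PosSemidef) (hScpsd : Sc.PosSemidef)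
    (hpdt : (Q₂ᵀ * St * Q₂).PosDef) (hpdc : (Q₂ᵀ * Sc * Q₂).PosDef)
    (hA : (T * ((Tᵀ * T)⁻¹ * (Tᵀ * T)⁻¹) * Tᵀ).IsHermitian)
    (ct : Fin n → ℝ) (dt : Fin p → ℝ)
    (hcdt : T *ᵥ dt + (St + ((n : ℝ) * lam) • 1) *ᵥ ct = y) (hct0 : Tᵀ *ᵥ ct = 0)
    (cc : Fin n → ℝ) (dc : Fin p → ℝ)
    (hcdc : T *ᵥ dc + (Sc + ((n : ℝ) * lam) • 1) *ᵥ cc = y) (hcc0 : Tᵀ *ᵥ cc = 0)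
    {H : Type*} [NormedAddCommGroup H] [InnerProductSpace ℝ H] [CompleteSpace H]
    (φ : Fin p → H) (Φ Φc : ℕ → H) (hφ : Orthonormal ℝ φ) (hΦ : Orthonormal ℝ Φ) :
    ‖((∑ ν, dc ν • φ ν) + ∑ k ∈ Finset.range K, (δc k * ∑ i, cc i * Uc i k) • Φc k) -
        ((∑ ν, dt ν • φ ν) + ∑ k ∈ Finset.range K, (δ k * ∑ i, ct i * U i k) • Φ k)‖ ^ 2 ≤
      4 * (vnormSq cc * (n : ℝ) * κ' ^ 2 * (∑ k ∈ Finset.range K, δc k ^ 2)) *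
          (∑ k ∈ Finset.range K, ‖Φc k - Φ k‖ ^ 2) +
        12 * vnormSq cc *
          (∑ k ∈ Finset.range K, δc k ^ 2 * ∑ i, (Uc i k - U i k) ^ 2) +
        12 * (n : ℝ) * κ ^ 2 * vnormSq cc * (∑ k ∈ Finset.range K, (δc k - δ k) ^ 2) +
        (12 * ((n : ℝ) * κ ^ 2 * (∑ k ∈ Finset.range K, δ k ^ 2) *
            ((frobSq Q₂) ^ 3 * vnormSq (Q₂ᵀ *ᵥ y)) *
            (∑ k, ((hpdt.1.eigenvalues k) ^ 2)⁻¹) *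
            (∑ k, ((hpdc.1.eigenvalues k) ^ 2)⁻¹)) +
          2 * (2 * (⨆ i, hA.eigenvalues i) *
            (((frobSq Q₂) ^ 3 * vnormSq (Q₂ᵀ *ᵥ y)) *
              (∑ k, ((hpdt.1.eigenvalues k) ^ 2)⁻¹) *
              (∑ k, ((hpdc.1.eigenvalues k) ^ 2)⁻¹) *
              frobSq St + vnormSq ct))) * frobSq (Sc - St) :=
  stmt18_general n p hpn y lam hlam T Q₁ Q₂ R hQ₁ hQ₂ hQ₁₂ hQ hR hT K κ κ' δ δc U hU Uc hUc St Sc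
    hpdt hpdc hA ct dt hcdt hct0 cc dc hcdc hcc0 φ Φ Φc hφ hΦ
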